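/- arXiv:2601.22307 — 4 statements merged into one kernel-verified Lean document; each statement's English description precedes it below -/
import Mathlib

section
/- Let (X₁, X₂) be jointly Gaussian with means μ₁, μ₂, variances ν₁₁, ν₂₂ > 0 and covariance ν₁₂. Then E[Φ(X₁)Φ(X₂)] = Φ₂(μ₁/√(1+ν₁₁), μ₂/√(1+ν₂₂); ν₁₂/√((1+ν₁₁)(1+ν₂₂))), where Φ₂ is the bivariate standard normal CDF with the given correlation. -/
open MeasureTheory ProbabilityTheory Real
open scoped NNReal

noncomputable def npdf (x : ℝ) : ℝ := (Real.sqrt (2 * Real.pi))⁻¹ * Real.exp (-(x ^ 2) / 2)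

noncomputable def ncdf (x : ℝ) : ℝ := ∫ t in Set.Iic x, npdf t

noncomputable def ncdf2 (h k ρ : ℝ) : ℝ :=
  ∫ p in Set.Iic h ×ˢ Set.Iic k,
    (2 * Real.pi * Real.sqrt (1 - ρ ^ 2))⁻¹ *
      Real.exp (-(p.1 ^ 2 + p.2 ^ 2 - 2 * ρ * p.1 * p.2) / (2 * (1 - ρ ^ 2)))

noncomputable def P2 : Measure (ℝ × ℝ) :=
  (ProbabilityTheory.gaussianReal 0 1).prod (ProbabilityTheory.gaussianReal 0 1)

/-!
Read `Φ(μ₁ + a x) φ(x)` as `∫_{u ≤ h} φ₂(u, x; ρ₁) du` with `h = μ₁ / √(1 + a²)` and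
`ρ₁ = -a / √(1 + a²)`: the first factor is the probability that a standard normal `U`,
correlated with the first coordinate, lies below `h`. Integrating out `W₂` first turns `Φ(X₂)` into
`Φ` of an affine function of `W₁`. After exchanging the order of integration, `W₁` given `U = u` is
normal with mean `ρ₁ u` and variance `1 - ρ₁²`, and averaging `Φ` of an affine function over a
normal law is again a value of `Φ`. What remains is `∫_{u ≤ h} φ(u) Φ((k - ρ u) / √(1 - ρ²)) du`,
which is `Φ₂(h, k; ρ)` conditioned on its first coordinate.
-/

open Set

lemma npdf_eq_gaussianPDFReal : npdf = gaussianPDFReal 0 1 := by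
  ext x
  simp [npdf, gaussianPDFReal, neg_div]

lemma measureReal_gaussianReal (m : ℝ) {v : ℝ≥0} (hv : v ≠ 0) (s : Set ℝ) :
    (gaussianReal m v).real s = ∫ x in s, gaussianPDFReal m v x := by
  rw [measureReal_def, gaussianReal_apply_eq_integral _ hv,
    ENNReal.toReal_ofReal (integral_nonneg fun _ ↦ gaussianPDFReal_nonneg ..)]

lemma ncdf_eq_cdf : ncdf = cdf (gaussianReal 0 1) := by
  ext x
  rw [cdf_eq_real, measureReal_gaussianReal _ one_ne_zero, ← npdf_eq_gaussianPDFReal, ncdf]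

@[fun_prop]
lemma measurable_ncdf : Measurable ncdf := ncdf_eq_cdf ▸ (cdf _).mono.measurable

lemma gaussianReal_eq_map_gaussianReal_zero_one (m : ℝ) (v : ℝ≥0) :
    gaussianReal m v = (gaussianReal 0 1).map (fun x ↦ m + √v * x) := by
  rw [show (fun x ↦ m + √v * x) = (m + ·) ∘ (√v * ·) from rfl,
    ← Measure.map_map (measurable_const_add m) (measurable_const_mul _),
    gaussianReal_map_const_mul, gaussianReal_map_const_add]
  congr 1
  · ring
  · ext; simp

lemma measureReal_gaussianReal_Iic (m : ℝ) {v : ℝ≥0} (hv : v ≠ 0) (k : ℝ) :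
    (gaussianReal m v).real (Iic k) = ncdf ((k - m) / √v) := by
  have hpos : 0 < √(v : ℝ) := by positivity
  have hpre : (fun x ↦ m + √v * x) ⁻¹' Iic k = Iic ((k - m) / √v) := by
    ext x
    simp only [mem_preimage, mem_Iic, le_div_iff₀ hpos]
    constructor <;> intro h <;> linarith
  rw [gaussianReal_eq_map_gaussianReal_zero_one,
    map_measureReal_apply (by fun_prop) measurableSet_Iic, hpre, ncdf_eq_cdf, cdf_eq_real]

lemma setIntegral_Iic_gaussianPDFReal (m : ℝ) {v : ℝ≥0} (hv : v ≠ 0) (k : ℝ) :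
    ∫ x in Iic k, gaussianPDFReal m v x = ncdf ((k - m) / √v) := by
  rw [← measureReal_gaussianReal _ hv, measureReal_gaussianReal_Iic m hv]

lemma norm_ncdf_le_one (x : ℝ) : ‖ncdf x‖ ≤ 1 := by
  rw [ncdf_eq_cdf, norm_of_nonneg (cdf_nonneg _ x)]
  exact cdf_le_one _ x

noncomputable def npdf2 (ρ u v : ℝ) : ℝ :=
  (2 * π * √(1 - ρ ^ 2))⁻¹ * exp (-(u ^ 2 + v ^ 2 - 2 * ρ * u * v) / (2 * (1 - ρ ^ 2)))

lemma npdf2_comm (ρ u v : ℝ) : npdf2 ρ u v = npdf2 ρ v u := by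
  simp only [npdf2]
  ring_nf

lemma npdf2_eq_npdf_mul_gaussianPDFReal {ρ : ℝ} (hρ : ρ ^ 2 < 1) (u v : ℝ) :
    npdf2 ρ u v = npdf u * gaussianPDFReal (ρ * u) (1 - ρ ^ 2).toNNReal v := by
  have h : 0 < 1 - ρ ^ 2 := by linarith
  have hexp : -(u ^ 2 + v ^ 2 - 2 * ρ * u * v) / (2 * (1 - ρ ^ 2))
      = -(u ^ 2) / 2 + -(v - ρ * u) ^ 2 / (2 * (1 - ρ ^ 2)) := by
    field_simp
    ring
  have h2π : (2 * π)⁻¹ = (√(2 * π))⁻¹ * (√(2 * π))⁻¹ := by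
    rw [← mul_inv, mul_self_sqrt (by positivity)]
  rw [npdf2, npdf, gaussianPDFReal, Real.coe_toNNReal _ h.le, hexp, exp_add,
    sqrt_mul (by positivity : (0 : ℝ) ≤ 2 * π) (1 - ρ ^ 2), mul_inv (2 * π), h2π]
  ring

lemma toNNReal_one_sub_sq_ne_zero {ρ : ℝ} (hρ : ρ ^ 2 < 1) : (1 - ρ ^ 2).toNNReal ≠ 0 := by
  simpa using hρ

lemma integrable_npdf2 {ρ : ℝ} (hρ : ρ ^ 2 < 1) :
    Integrable (fun p : ℝ × ℝ ↦ npdf2 ρ p.1 p.2) := by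
  have hmeas : AEStronglyMeasurable (fun p : ℝ × ℝ ↦ npdf2 ρ p.1 p.2) (volume.prod volume) := by
    unfold npdf2; fun_prop
  rw [Measure.volume_eq_prod, integrable_prod_iff hmeas]
  simp_rw [npdf2_eq_npdf_mul_gaussianPDFReal hρ]
  refine ⟨ae_of_all _ fun u ↦ (integrable_gaussianPDFReal _ _).const_mul _, ?_⟩
  have hnorm (u : ℝ) : ∫ v, ‖npdf u * gaussianPDFReal (ρ * u) (1 - ρ ^ 2).toNNReal v‖ = npdf u := by
    simp_rw [norm_mul, integral_const_mul, norm_of_nonneg (gaussianPDFReal_nonneg _ _ _),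
      integral_gaussianPDFReal_eq_one _ (toNNReal_one_sub_sq_ne_zero hρ), mul_one,
      npdf_eq_gaussianPDFReal, norm_of_nonneg (gaussianPDFReal_nonneg _ _ _)]
  simp_rw [hnorm, npdf_eq_gaussianPDFReal]
  exact integrable_gaussianPDFReal 0 1

lemma setIntegral_npdf2_Iic {ρ : ℝ} (hρ : ρ ^ 2 < 1) (u k : ℝ) :
    ∫ v in Iic k, npdf2 ρ u v = npdf u * ncdf ((k - ρ * u) / √(1 - ρ ^ 2)) := by
  simp_rw [npdf2_eq_npdf_mul_gaussianPDFReal hρ, integral_const_mul,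
    setIntegral_Iic_gaussianPDFReal _ (toNNReal_one_sub_sq_ne_zero hρ),
    Real.coe_toNNReal _ (sub_nonneg.2 hρ.le)]

lemma ncdf2_eq_setIntegral_npdf_mul_ncdf {ρ : ℝ} (hρ : ρ ^ 2 < 1) (h k : ℝ) :
    ncdf2 h k ρ = ∫ u in Iic h, npdf u * ncdf ((k - ρ * u) / √(1 - ρ ^ 2)) := by
  change ∫ p in Iic h ×ˢ Iic k, npdf2 ρ p.1 p.2 = _
  rw [Measure.volume_eq_prod, setIntegral_prod _ (integrable_npdf2 hρ).integrableOn]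
  simp_rw [setIntegral_npdf2_Iic hρ]

lemma integral_setIntegral_npdf2_mul_swap {ρ : ℝ} (hρ : ρ ^ 2 < 1) {ψ : ℝ → ℝ}
    (hψ : AEStronglyMeasurable ψ) {C : ℝ} (hψC : ∀ x, ‖ψ x‖ ≤ C) (s : Set ℝ) :
    ∫ x, ∫ u in s, npdf2 ρ u x * ψ x = ∫ u in s, ∫ x, npdf2 ρ u x * ψ x := by
  refine integral_integral_swap ?_
  have hint : Integrable (fun p : ℝ × ℝ ↦ ψ p.1 * npdf2 ρ p.1 p.2) (volume.prod volume) :=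
    (integrable_npdf2 hρ).bdd_mul (hψ.comp_fst) (ae_of_all _ fun p ↦ hψC p.1)
  have hint_s := hint.restrict (s := univ ×ˢ s)
  rw [← Measure.prod_restrict, Measure.restrict_univ] at hint_s
  refine hint_s.congr (ae_of_all _ fun p ↦ ?_)
  change ψ p.1 * npdf2 ρ p.1 p.2 = npdf2 ρ p.2 p.1 * ψ p.1
  rw [npdf2_comm, mul_comm]

lemma ncdf_mul_npdf_eq_setIntegral_npdf2 {ρ : ℝ} (hρ : ρ ^ 2 < 1) (h x : ℝ) :
    ncdf ((h - ρ * x) / √(1 - ρ ^ 2)) * npdf x = ∫ u in Iic h, npdf2 ρ u x := by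
  simp_rw [npdf2_comm ρ _ x, setIntegral_npdf2_Iic hρ, mul_comm]

lemma integral_ncdf_mul_gaussianReal {ρ : ℝ} (hρ : ρ ^ 2 < 1) {ψ : ℝ → ℝ}
    (hψ : AEStronglyMeasurable ψ) {C : ℝ} (hψC : ∀ x, ‖ψ x‖ ≤ C) (h : ℝ) :
    ∫ x, ncdf ((h - ρ * x) / √(1 - ρ ^ 2)) * ψ x ∂gaussianReal 0 1
      = ∫ u in Iic h, npdf u * ∫ x, ψ x ∂gaussianReal (ρ * u) (1 - ρ ^ 2).toNNReal := by
  calc ∫ x, ncdf ((h - ρ * x) / √(1 - ρ ^ 2)) * ψ x ∂gaussianReal 0 1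
      = ∫ x, ∫ u in Iic h, npdf2 ρ u x * ψ x := by
        simp_rw [integral_gaussianReal_eq_integral_smul one_ne_zero, smul_eq_mul,
          integral_mul_const, ← ncdf_mul_npdf_eq_setIntegral_npdf2 hρ, npdf_eq_gaussianPDFReal]
        congr 1 with x
        ring
    _ = ∫ u in Iic h, ∫ x, npdf2 ρ u x * ψ x :=
        integral_setIntegral_npdf2_mul_swap hρ hψ hψC _
    _ = _ := by
        refine setIntegral_congr_fun measurableSet_Iic fun u _ ↦ ?_
        simp_rw [integral_gaussianReal_eq_integral_smul (toNNReal_one_sub_sq_ne_zero hρ),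
          smul_eq_mul, ← integral_const_mul, npdf2_eq_npdf_mul_gaussianPDFReal hρ, mul_assoc]

lemma one_sub_sq_div_sqrt_one_add_sq (β : ℝ) : 1 - (β / √(1 + β ^ 2)) ^ 2 = (1 + β ^ 2)⁻¹ := by
  rw [div_pow, sq_sqrt (by positivity)]
  field_simp
  ring

lemma integral_ncdf_affine_mul_gaussianReal (α β : ℝ) {ψ : ℝ → ℝ}
    (hψ : AEStronglyMeasurable ψ) {C : ℝ} (hψC : ∀ x, ‖ψ x‖ ≤ C) :
    ∫ x, ncdf (α + β * x) * ψ x ∂gaussianReal 0 1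
      = ∫ u in Iic (α / √(1 + β ^ 2)),
          npdf u * ∫ x, ψ x ∂gaussianReal (-β / √(1 + β ^ 2) * u) (1 + β ^ 2)⁻¹.toNNReal := by
  have hvar : 1 - (-β / √(1 + β ^ 2)) ^ 2 = (1 + β ^ 2)⁻¹ := by
    rw [neg_div, neg_sq, one_sub_sq_div_sqrt_one_add_sq]
  have hρ : (-β / √(1 + β ^ 2)) ^ 2 < 1 := by
    have : 0 < (1 + β ^ 2)⁻¹ := by positivity
    linarith
  have harg (x : ℝ) : α + β * x
      = (α / √(1 + β ^ 2) - -β / √(1 + β ^ 2) * x) / √(1 - (-β / √(1 + β ^ 2)) ^ 2) := by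
    rw [hvar, sqrt_inv]
    field_simp
    ring
  simp_rw [harg]
  rw [integral_ncdf_mul_gaussianReal hρ hψ hψC, hvar]

lemma integral_ncdf_affine_gaussianReal_zero_one (α β : ℝ) :
    ∫ x, ncdf (α + β * x) ∂gaussianReal 0 1 = ncdf (α / √(1 + β ^ 2)) := by
  simpa [ncdf] using integral_ncdf_affine_mul_gaussianReal α β (ψ := 1)
    aestronglyMeasurable_const (C := 1) (by simp)

lemma integral_ncdf_affine_gaussianReal (m : ℝ) (v : ℝ≥0) (α β : ℝ) :
    ∫ x, ncdf (α + β * x) ∂gaussianReal m v = ncdf ((α + β * m) / √(1 + β ^ 2 * v)) := by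
  have harg (x : ℝ) : α + β * (m + √v * x) = α + β * m + β * √v * x := by ring
  rw [gaussianReal_eq_map_gaussianReal_zero_one,
    integral_map (f := fun x ↦ ncdf (α + β * x)) (by fun_prop)
      (measurable_ncdf.comp (by fun_prop)).aestronglyMeasurable]
  simp_rw [harg, integral_ncdf_affine_gaussianReal_zero_one, mul_pow, sq_sqrt v.coe_nonneg]

-- Both sides equal `(μ₂ √(1 + a²) - a b u) / √((1 + a²)(1 + c²) + b²)`.
lemma conditional_ncdf_arg_eq (a b c μ₂ u : ℝ) :
    (μ₂ / √(1 + c ^ 2) + b / √(1 + c ^ 2) * (-a / √(1 + a ^ 2) * u))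
        / √(1 + (b / √(1 + c ^ 2)) ^ 2 * (1 + a ^ 2)⁻¹)
      = (μ₂ / √(1 + (b ^ 2 + c ^ 2)) - a * b / √((1 + a ^ 2) * (1 + (b ^ 2 + c ^ 2))) * u)
        / √(1 - (a * b / √((1 + a ^ 2) * (1 + (b ^ 2 + c ^ 2)))) ^ 2) := by
  have hsplit : √((1 + a ^ 2) * (1 + (b ^ 2 + c ^ 2))) = √(1 + a ^ 2) * √(1 + (b ^ 2 + c ^ 2)) :=
    sqrt_mul (by positivity) _
  set s₁ := √(1 + a ^ 2)
  set s₂ := √(1 + (b ^ 2 + c ^ 2))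
  set τ := √(1 + c ^ 2)
  have hs₁ : s₁ ^ 2 = 1 + a ^ 2 := sq_sqrt (by positivity)
  have hs₂ : s₂ ^ 2 = 1 + (b ^ 2 + c ^ 2) := sq_sqrt (by positivity)
  have hτ : τ ^ 2 = 1 + c ^ 2 := sq_sqrt (by positivity)
  have : 0 < s₁ := by positivity
  have : 0 < s₂ := by positivity
  have : 0 < τ := by positivity
  set D := (1 + a ^ 2) * (1 + c ^ 2) + b ^ 2
  have hD : √D ^ 2 = D := sq_sqrt (by positivity)
  have hL : 1 + (b / τ) ^ 2 * (1 + a ^ 2)⁻¹ = (√D / (τ * s₁)) ^ 2 := by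
    rw [div_pow, div_pow, mul_pow, hD, hτ, hs₁]
    field_simp
    ring
  have hR : 1 - (a * b / (s₁ * s₂)) ^ 2 = (√D / (s₁ * s₂)) ^ 2 := by
    rw [div_pow, div_pow, mul_pow, mul_pow, hD, hs₁, hs₂]
    field_simp
    ring
  rw [hsplit, hL, hR, sqrt_sq (by positivity), sqrt_sq (by positivity)]
  field_simp
  ring

theorem gaussian_expectation_ncdf_mul_ncdf_general (μ₁ μ₂ ν₁₁ ν₂₂ ν₁₂ a b c : ℝ)
    (h11 : ν₁₁ = a ^ 2) (h22 : ν₂₂ = b ^ 2 + c ^ 2) (h12 : ν₁₂ = a * b) :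
    ∫ w : ℝ × ℝ, ncdf (μ₁ + a * w.1) * ncdf (μ₂ + b * w.1 + c * w.2) ∂P2
      = ncdf2 (μ₁ / Real.sqrt (1 + ν₁₁)) (μ₂ / Real.sqrt (1 + ν₂₂))
          (ν₁₂ / Real.sqrt ((1 + ν₁₁) * (1 + ν₂₂))) := by
  subst h11 h22 h12
  have hρ : (a * b / √((1 + a ^ 2) * (1 + (b ^ 2 + c ^ 2)))) ^ 2 < 1 := by
    rw [div_pow, sq_sqrt (by positivity), div_lt_one (by positivity)]
    nlinarith [sq_nonneg a, sq_nonneg b, sq_nonneg c, sq_nonneg (a * c)]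
  have hint : Integrable (fun w : ℝ × ℝ ↦ ncdf (μ₁ + a * w.1) * ncdf (μ₂ + b * w.1 + c * w.2))
      ((gaussianReal 0 1).prod (gaussianReal 0 1)) :=
    .of_bound (by fun_prop) 1 (ae_of_all _ fun w ↦ by
      simpa [norm_mul] using mul_le_one₀ (norm_ncdf_le_one _) (norm_nonneg _) (norm_ncdf_le_one _))
  have hinner (x : ℝ) : ∫ y, ncdf (μ₂ + b * x + c * y) ∂gaussianReal 0 1
      = ncdf (μ₂ / √(1 + c ^ 2) + b / √(1 + c ^ 2) * x) := by
    rw [integral_ncdf_affine_gaussianReal_zero_one, add_div, mul_div_right_comm]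
  rw [ncdf2_eq_setIntegral_npdf_mul_ncdf hρ, P2, integral_prod _ hint]
  simp_rw [integral_const_mul, hinner]
  rw [integral_ncdf_affine_mul_gaussianReal μ₁ a
    (Measurable.aestronglyMeasurable (by fun_prop)) fun _ ↦ norm_ncdf_le_one _]
  simp_rw [integral_ncdf_affine_gaussianReal,
    Real.coe_toNNReal _ (by positivity : (0 : ℝ) ≤ (1 + a ^ 2)⁻¹), conditional_ncdf_arg_eq]

/-- Bivariate Gaussian `(X₁, X₂)` represented as `X₁ = μ₁ + a W₁`,
`X₂ = μ₂ + b W₁ + c W₂` for independent standard normals `W₁, W₂`. -/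
theorem gaussian_expectation_ncdf_mul_ncdf (μ₁ μ₂ ν₁₁ ν₂₂ ν₁₂ a b c : ℝ)
    (h11 : ν₁₁ = a ^ 2) (h22 : ν₂₂ = b ^ 2 + c ^ 2) (h12 : ν₁₂ = a * b)
    (hp1 : 0 < ν₁₁) (hp2 : 0 < ν₂₂) :
    ∫ w : ℝ × ℝ, ncdf (μ₁ + a * w.1) * ncdf (μ₂ + b * w.1 + c * w.2) ∂P2
      = ncdf2 (μ₁ / Real.sqrt (1 + ν₁₁)) (μ₂ / Real.sqrt (1 + ν₂₂))
          (ν₁₂ / Real.sqrt ((1 + ν₁₁) * (1 + ν₂₂))) :=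
  gaussian_expectation_ncdf_mul_ncdf_general μ₁ μ₂ ν₁₁ ν₂₂ ν₁₂ a b c h11 h22 h12
end

section
/- For |ρ| < 1, the derivative of the bivariate standard normal CDF with respect to the correlation parameter satisfies ∂Φ₂(h, k; ρ)/∂ρ = (1/(2π√(1-ρ²))) exp(-(h² + k² - 2ρhk)/(2(1-ρ²))). -/
/-!
The density `f_ρ(x, y)` of the standard bivariate normal law satisfies `∂f/∂ρ = ∂²f/∂x∂y`.
For `|ρ| < 1` the density and these derivatives are bounded, locally uniformly in `ρ`, by a
multiple of `(1 + x²)(1 + y²) exp (-a (x² + y²))` with `a > 0`. So `Φ₂` may be differentiated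
under the integral sign, and integrating the mixed partial over `(-∞, h] × (-∞, k]`, one variable
at a time, leaves `f_ρ(h, k)`.
-/

open MeasureTheory ProbabilityTheory Real
open scoped NNReal

open Set Filter Function
open scoped Topology

theorem setIntegral_Iic_prod_Iic_of_hasDerivAt_of_tendsto {G G₁ G₁₂ : ℝ → ℝ → ℝ} {h k : ℝ}
    (hG : ∀ x ≤ h, HasDerivAt (G · k) (G₁ x k) x)
    (hG₁ : ∀ x ≤ h, ∀ y ≤ k, HasDerivAt (G₁ x) (G₁₂ x y) y)
    (hG₁₂_int : IntegrableOn (uncurry G₁₂) (Iic h ×ˢ Iic k))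
    (hG₁₂_int_snd : ∀ x ≤ h, IntegrableOn (G₁₂ x) (Iic k))
    (hG₁_int : IntegrableOn (G₁ · k) (Iic h))
    (hG₁_lim : ∀ x ≤ h, Tendsto (G₁ x) atBot (𝓝 0))
    (hG_lim : Tendsto (G · k) atBot (𝓝 0)) :
    ∫ p in Iic h ×ˢ Iic k, G₁₂ p.1 p.2 = G h k := by
  have hinner : ∀ x ∈ Iic h, ∫ y in Iic k, G₁₂ x y = G₁ x k := fun x hx => by
    simpa using integral_Iic_of_hasDerivAt_of_tendsto' (hG₁ x hx) (hG₁₂_int_snd x hx) (hG₁_lim x hx)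
  calc ∫ p in Iic h ×ˢ Iic k, G₁₂ p.1 p.2
      = ∫ x in Iic h, ∫ y in Iic k, G₁₂ x y := setIntegral_prod _ hG₁₂_int
    _ = ∫ x in Iic h, G₁ x k := setIntegral_congr_fun measurableSet_Iic hinner
    _ = G h k := by simpa using integral_Iic_of_hasDerivAt_of_tendsto' hG hG₁_int hG_lim

noncomputable def quadGaussWeight (a t : ℝ) : ℝ := (1 + t ^ 2) * exp (-a * t ^ 2)

lemma quadGaussWeight_eq_rpow_abs (a t : ℝ) :
    quadGaussWeight a t = |t| ^ (0 : ℝ) * exp (-a * t ^ 2) + |t| ^ (2 : ℝ) * exp (-a * t ^ 2) := by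
  rw [quadGaussWeight, rpow_zero, rpow_two, sq_abs]; ring

lemma integrable_quadGaussWeight {a : ℝ} (ha : 0 < a) : Integrable (quadGaussWeight a) := by
  have h0 := integrable_exp_neg_mul_sq ha
  have h2 := integrable_rpow_mul_exp_neg_mul_sq ha (s := 2) (by norm_num)
  refine (h0.add h2).congr (Eventually.of_forall fun t => ?_)
  simp only [neg_mul, rpow_ofNat, Pi.add_apply, quadGaussWeight]
  ring

lemma integrable_quadGaussWeight_mul {a : ℝ} (ha : 0 < a) :
    Integrable (fun p : ℝ × ℝ => quadGaussWeight a p.1 * quadGaussWeight a p.2) :=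
  (integrable_quadGaussWeight ha).mul_prod (integrable_quadGaussWeight ha)

lemma tendsto_quadGaussWeight_atBot {a : ℝ} (ha : 0 < a) :
    Tendsto (quadGaussWeight a) atBot (𝓝 0) := by
  have h := (tendsto_rpow_abs_mul_exp_neg_mul_sq_cocompact ha 0).add
    (tendsto_rpow_abs_mul_exp_neg_mul_sq_cocompact ha 2)
  rw [add_zero, ← funext (quadGaussWeight_eq_rpow_abs a)] at h
  exact h.mono_left atBot_le_cocompact

def IsQuadGaussBounded (a C : ℝ) (F : ℝ → ℝ → ℝ) : Prop :=
  ∀ x y, |F x y| ≤ C * (quadGaussWeight a x * quadGaussWeight a y)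

namespace IsQuadGaussBounded

variable {a C : ℝ} {F : ℝ → ℝ → ℝ}

lemma integrable_uncurry (hF : IsQuadGaussBounded a C F) (ha : 0 < a)
    (hFc : Continuous (uncurry F)) : Integrable (uncurry F) :=
  ((integrable_quadGaussWeight_mul ha).const_mul C).mono'
    hFc.aestronglyMeasurable (Eventually.of_forall fun p => hF p.1 p.2)

lemma integrable_left (hF : IsQuadGaussBounded a C F) (ha : 0 < a)
    (hFc : Continuous (uncurry F)) (x : ℝ) : Integrable (F x) :=
  ((integrable_quadGaussWeight ha).const_mul (C * quadGaussWeight a x)).mono'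
    (hFc.uncurry_left x).aestronglyMeasurable
    (Eventually.of_forall fun y => (hF x y).trans_eq (mul_assoc _ _ _).symm)

lemma integrable_right (hF : IsQuadGaussBounded a C F) (ha : 0 < a)
    (hFc : Continuous (uncurry F)) (y : ℝ) : Integrable (F · y) :=
  ((integrable_quadGaussWeight ha).const_mul (C * quadGaussWeight a y)).mono'
    (hFc.uncurry_right y).aestronglyMeasurable
    (Eventually.of_forall fun x => (hF x y).trans_eq (by ring))

lemma tendsto_left (hF : IsQuadGaussBounded a C F) (ha : 0 < a) (x : ℝ) :
    Tendsto (F x) atBot (𝓝 0) :=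
  squeeze_zero_norm (a := fun y => C * quadGaussWeight a x * quadGaussWeight a y)
    (fun y => (hF x y).trans_eq (mul_assoc _ _ _).symm)
    (by simpa using (tendsto_quadGaussWeight_atBot ha).const_mul (C * quadGaussWeight a x))

lemma tendsto_right (hF : IsQuadGaussBounded a C F) (ha : 0 < a) (y : ℝ) :
    Tendsto (F · y) atBot (𝓝 0) :=
  squeeze_zero_norm (a := fun x => C * quadGaussWeight a y * quadGaussWeight a x)
    (fun x => (hF x y).trans_eq (by ring))
    (by simpa using (tendsto_quadGaussWeight_atBot ha).const_mul (C * quadGaussWeight a y))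

end IsQuadGaussBounded

noncomputable def bvnPDF (r x y : ℝ) : ℝ :=
  (2 * π * √(1 - r ^ 2))⁻¹ * exp (-(x ^ 2 + y ^ 2 - 2 * r * x * y) / (2 * (1 - r ^ 2)))

noncomputable def bvnPDFDerivFst (r x y : ℝ) : ℝ :=
  bvnPDF r x y * ((r * y - x) / (1 - r ^ 2))

-- Both `∂f/∂r` and `∂²f/∂x∂y` for `f = bvnPDF r`.
noncomputable def bvnPDFDerivCorr (r x y : ℝ) : ℝ :=
  bvnPDF r x y * ((r * y - x) * (r * x - y) / (1 - r ^ 2) ^ 2 + r / (1 - r ^ 2))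

lemma one_sub_sq_pos_of_abs_lt_one {r : ℝ} (hr : |r| < 1) : 0 < 1 - r ^ 2 := by
  nlinarith [abs_nonneg r, sq_abs r]

lemma bvnPDF_comm (r x y : ℝ) : bvnPDF r x y = bvnPDF r y x := by
  unfold bvnPDF; ring_nf

lemma hasDerivAt_bvnPDF_fst {r : ℝ} (hr : |r| < 1) (x y : ℝ) :
    HasDerivAt (bvnPDF r · y) (bvnPDFDerivFst r x y) x := by
  have hu := (one_sub_sq_pos_of_abs_lt_one hr).ne'
  have hQ : HasDerivAt (fun x => -(x ^ 2 + y ^ 2 - 2 * r * x * y) / (2 * (1 - r ^ 2)))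
      ((r * y - x) / (1 - r ^ 2)) x := by
    refine ((((hasDerivAt_pow 2 x).add_const (y ^ 2)).sub
      (((hasDerivAt_id' x).const_mul (2 * r)).mul_const y)).neg.div_const
        (2 * (1 - r ^ 2))).congr_deriv ?_
    field_simp; ring
  exact (hQ.exp.const_mul _).congr_deriv (mul_assoc _ _ _).symm

lemma hasDerivAt_bvnPDF_snd {r : ℝ} (hr : |r| < 1) (x y : ℝ) :
    HasDerivAt (bvnPDF r x) (bvnPDFDerivFst r y x) y := by
  rw [show bvnPDF r x = (bvnPDF r · x) from funext (bvnPDF_comm r x)]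
  exact hasDerivAt_bvnPDF_fst hr y x

lemma hasDerivAt_bvnPDFDerivFst_snd {r : ℝ} (hr : |r| < 1) (x y : ℝ) :
    HasDerivAt (bvnPDFDerivFst r x) (bvnPDFDerivCorr r x y) y := by
  have hu := (one_sub_sq_pos_of_abs_lt_one hr).ne'
  refine ((hasDerivAt_bvnPDF_snd hr x y).mul
    ((((hasDerivAt_id' y).const_mul r).sub_const x).div_const (1 - r ^ 2))).congr_deriv ?_
  rw [bvnPDFDerivCorr, bvnPDFDerivFst, bvnPDF_comm r y x]
  field_simp

lemma hasDerivAt_bvnPDF_corr {r : ℝ} (hr : |r| < 1) (x y : ℝ) :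
    HasDerivAt (bvnPDF · x y) (bvnPDFDerivCorr r x y) r := by
  have hu := one_sub_sq_pos_of_abs_lt_one hr
  have hU : HasDerivAt (fun r : ℝ => 1 - r ^ 2) (-(2 * r)) r := by
    simpa using (hasDerivAt_pow 2 r).const_sub 1
  have hA : HasDerivAt (fun r => (2 * π * √(1 - r ^ 2))⁻¹)
      ((2 * π * √(1 - r ^ 2))⁻¹ * (r / (1 - r ^ 2))) r := by
    have hs : 0 < √(1 - r ^ 2) := sqrt_pos.2 hu
    refine (((hU.sqrt hu.ne').const_mul (2 * π)).inv (by positivity)).congr_deriv ?_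
    field_simp
    rw [sq_sqrt hu.le]
  have hQ : HasDerivAt (fun r => -(x ^ 2 + y ^ 2 - 2 * r * x * y) / (2 * (1 - r ^ 2)))
      ((r * y - x) * (r * x - y) / (1 - r ^ 2) ^ 2) r := by
    refine (((((hasDerivAt_id' r).const_mul 2).mul_const x).mul_const y |>.const_sub
      (x ^ 2 + y ^ 2) |>.neg.div (hU.const_mul 2) (by positivity))).congr_deriv ?_
    simp only [Pi.neg_apply]
    field_simp
    ring
  refine (hA.mul hQ.exp).congr_deriv ?_
  rw [bvnPDFDerivCorr, bvnPDF]
  ring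

section Bounds

variable {c r : ℝ}

lemma one_sub_sq_le_of_abs_le (hr : |r| ≤ c) : 1 - c ^ 2 ≤ 1 - r ^ 2 := by
  nlinarith [abs_nonneg r, sq_abs r]

lemma quadForm_lower_bound (hc : c < 1) (hr : |r| ≤ c) (x y : ℝ) :
    (1 - c) / 2 * (x ^ 2 + y ^ 2) ≤ (x ^ 2 + y ^ 2 - 2 * r * x * y) / (2 * (1 - r ^ 2)) := by
  have hu := one_sub_sq_pos_of_abs_lt_one (hr.trans_lt hc)
  have hcross : 2 * r * x * y ≤ c * (x ^ 2 + y ^ 2) := by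
    have := abs_le.1 hr
    nlinarith [sq_nonneg (x - y), sq_nonneg (x + y), abs_nonneg r]
  have hS : 0 ≤ (1 - c) * (x ^ 2 + y ^ 2) := by nlinarith [sq_nonneg x, sq_nonneg y]
  rw [le_div_iff₀ (by positivity)]
  nlinarith [mul_nonneg hS (sq_nonneg r)]

lemma bvnPDF_le (hc : c < 1) (hr : |r| ≤ c) (x y : ℝ) :
    bvnPDF r x y ≤ (2 * π * √(1 - c ^ 2))⁻¹ *
      (exp (-((1 - c) / 2) * x ^ 2) * exp (-((1 - c) / 2) * y ^ 2)) := by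
  have hv : 0 < 1 - c ^ 2 := by nlinarith [abs_nonneg r]
  rw [bvnPDF, ← exp_add]
  refine mul_le_mul ?_ ?_ (exp_nonneg _) (by positivity)
  · gcongr (2 * π * √?_)⁻¹
    exact one_sub_sq_le_of_abs_le hr
  · rw [exp_le_exp, neg_div]
    linarith [quadForm_lower_bound hc hr x y]

lemma abs_bvnPDF_mul_le {M p x y : ℝ} (hc : c < 1) (hr : |r| ≤ c)
    (hp : |p| ≤ M * ((1 + x ^ 2) * (1 + y ^ 2))) :
    |bvnPDF r x y * p| ≤ (2 * π * √(1 - c ^ 2))⁻¹ * M *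
      (quadGaussWeight ((1 - c) / 2) x * quadGaussWeight ((1 - c) / 2) y) := by
  have hf : 0 ≤ bvnPDF r x y := by unfold bvnPDF; positivity
  rw [abs_mul, abs_of_nonneg hf]
  calc bvnPDF r x y * |p|
      ≤ (2 * π * √(1 - c ^ 2))⁻¹ *
          (exp (-((1 - c) / 2) * x ^ 2) * exp (-((1 - c) / 2) * y ^ 2)) *
          (M * ((1 + x ^ 2) * (1 + y ^ 2))) :=
        mul_le_mul (bvnPDF_le hc hr x y) hp (abs_nonneg p) (by positivity)
    _ = _ := by unfold quadGaussWeight; ring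

lemma one_le_one_add_sq_mul (x y : ℝ) : 1 ≤ (1 + x ^ 2) * (1 + y ^ 2) := by
  nlinarith [sq_nonneg x, sq_nonneg y, sq_nonneg (x * y)]

lemma abs_add_abs_le_one_add_sq_mul (x y : ℝ) : |x| + |y| ≤ (1 + x ^ 2) * (1 + y ^ 2) := by
  nlinarith [sq_abs x, sq_abs y, sq_nonneg (|x| - 1), sq_nonneg (|y| - 1), sq_nonneg (x * y)]

lemma abs_mul_sub_le (hr : |r| ≤ 1) (x y : ℝ) : |r * y - x| ≤ |x| + |y| := by
  calc |r * y - x| ≤ |r| * |y| + |x| := by rw [← abs_mul]; exact abs_sub _ _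
    _ ≤ |x| + |y| := by nlinarith [abs_nonneg y]

lemma isQuadGaussBounded_bvnPDF (hc : c < 1) (hr : |r| ≤ c) :
    IsQuadGaussBounded ((1 - c) / 2) ((2 * π * √(1 - c ^ 2))⁻¹) (bvnPDF r) := fun x y => by
  simpa only [mul_one] using abs_bvnPDF_mul_le (p := 1) (M := 1) (x := x) (y := y) hc hr
    (by rw [abs_one, one_mul]; exact one_le_one_add_sq_mul x y)

lemma isQuadGaussBounded_bvnPDFDerivFst (hc : c < 1) (hr : |r| ≤ c) :
    IsQuadGaussBounded ((1 - c) / 2) ((2 * π * √(1 - c ^ 2))⁻¹ * (1 - c ^ 2)⁻¹)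
      (bvnPDFDerivFst r) := fun x y => by
  have hv : 0 < 1 - c ^ 2 := by nlinarith [abs_nonneg r]
  have hvu := one_sub_sq_le_of_abs_le hr
  refine abs_bvnPDF_mul_le hc hr ?_
  rw [abs_div, abs_of_pos (hv.trans_le hvu), div_eq_inv_mul]
  exact mul_le_mul (inv_anti₀ hv hvu)
    ((abs_mul_sub_le (hr.trans hc.le) x y).trans (abs_add_abs_le_one_add_sq_mul x y))
    (abs_nonneg _) (by positivity)

lemma isQuadGaussBounded_bvnPDFDerivCorr (hc : c < 1) (hr : |r| ≤ c) :
    IsQuadGaussBounded ((1 - c) / 2) ((2 * π * √(1 - c ^ 2))⁻¹ * (3 / (1 - c ^ 2) ^ 2))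
      (bvnPDFDerivCorr r) := fun x y => by
  have hv : 0 < 1 - c ^ 2 := by nlinarith [abs_nonneg r]
  have hvu := one_sub_sq_le_of_abs_le hr
  have hu : 0 < 1 - r ^ 2 := hv.trans_le hvu
  have hr1 : |r| ≤ 1 := hr.trans hc.le
  have hnum : |(r * y - x) * (r * x - y)| ≤ 2 * ((1 + x ^ 2) * (1 + y ^ 2)) := by
    rw [abs_mul]
    calc |r * y - x| * |r * x - y| ≤ (|x| + |y|) * (|y| + |x|) :=
          mul_le_mul (abs_mul_sub_le hr1 x y) (abs_mul_sub_le hr1 y x) (abs_nonneg _)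
            (by positivity)
      _ ≤ 2 * ((1 + x ^ 2) * (1 + y ^ 2)) := by
          nlinarith [sq_abs x, sq_abs y, sq_nonneg (|x| - |y|), sq_nonneg (x * y)]
  have hP1 := one_le_one_add_sq_mul x y
  refine abs_bvnPDF_mul_le hc hr ?_
  calc |(r * y - x) * (r * x - y) / (1 - r ^ 2) ^ 2 + r / (1 - r ^ 2)|
      ≤ |(r * y - x) * (r * x - y)| / (1 - r ^ 2) ^ 2 + |r| / (1 - r ^ 2) := by
        refine (abs_add_le _ _).trans_eq ?_
        rw [abs_div, abs_div, abs_of_pos hu, abs_of_pos (pow_pos hu 2)]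
    _ ≤ 2 * ((1 + x ^ 2) * (1 + y ^ 2)) / (1 - c ^ 2) ^ 2 + 1 / (1 - c ^ 2) := by
        gcongr
    _ ≤ 2 * ((1 + x ^ 2) * (1 + y ^ 2)) / (1 - c ^ 2) ^ 2 +
          (1 + x ^ 2) * (1 + y ^ 2) / (1 - c ^ 2) ^ 2 := by
        gcongr
        nlinarith
    _ = 3 / (1 - c ^ 2) ^ 2 * ((1 + x ^ 2) * (1 + y ^ 2)) := by ring

end Bounds

lemma continuous_uncurry_bvnPDF (r : ℝ) : Continuous (uncurry (bvnPDF r)) := by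
  unfold bvnPDF
  fun_prop

lemma continuous_uncurry_bvnPDFDerivFst (r : ℝ) : Continuous (uncurry (bvnPDFDerivFst r)) :=
  (continuous_uncurry_bvnPDF r).mul (by fun_prop)

lemma continuous_uncurry_bvnPDFDerivCorr (r : ℝ) :
    Continuous (uncurry (bvnPDFDerivCorr r)) :=
  (continuous_uncurry_bvnPDF r).mul (by fun_prop)

lemma hasDerivAt_setIntegral_bvnPDF (s : Set (ℝ × ℝ)) {ρ : ℝ} (hρ : |ρ| < 1) :
    HasDerivAt (fun r => ∫ p in s, uncurry (bvnPDF r) p)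
      (∫ p in s, uncurry (bvnPDFDerivCorr ρ) p) ρ := by
  obtain ⟨c, hρc, hc⟩ := exists_between hρ
  have ha : 0 < (1 - c) / 2 := by linarith
  have hball : ∀ r ∈ Metric.ball ρ (c - |ρ|), |r| ≤ c := fun r hr => by
    rw [Metric.mem_ball, Real.dist_eq] at hr
    linarith [abs_sub_abs_le_abs_sub r ρ]
  refine (hasDerivAt_integral_of_dominated_loc_of_deriv_le
    (Metric.ball_mem_nhds ρ (by linarith))
    (Eventually.of_forall fun r => (continuous_uncurry_bvnPDF r).aestronglyMeasurable)
    ((isQuadGaussBounded_bvnPDF hc (by linarith)).integrable_uncurry ha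
      (continuous_uncurry_bvnPDF ρ)).integrableOn
    (continuous_uncurry_bvnPDFDerivCorr ρ).aestronglyMeasurable
    (Eventually.of_forall fun p r hr => isQuadGaussBounded_bvnPDFDerivCorr hc (hball r hr) p.1 p.2)
    ((integrable_quadGaussWeight_mul ha).const_mul _).integrableOn
    (Eventually.of_forall fun p r hr =>
      hasDerivAt_bvnPDF_corr ((hball r hr).trans_lt hc) p.1 p.2)).2

lemma setIntegral_Iic_prod_Iic_bvnPDFDerivCorr {ρ : ℝ} (hρ : |ρ| < 1) (h k : ℝ) :
    ∫ p in Iic h ×ˢ Iic k, bvnPDFDerivCorr ρ p.1 p.2 = bvnPDF ρ h k := by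
  have ha : 0 < (1 - |ρ|) / 2 := by linarith
  have hPDF := isQuadGaussBounded_bvnPDF hρ le_rfl
  have hFst := isQuadGaussBounded_bvnPDFDerivFst hρ le_rfl
  have hCorr := isQuadGaussBounded_bvnPDFDerivCorr hρ le_rfl
  exact setIntegral_Iic_prod_Iic_of_hasDerivAt_of_tendsto
    (fun x _ => hasDerivAt_bvnPDF_fst hρ x k)
    (fun x _ y _ => hasDerivAt_bvnPDFDerivFst_snd hρ x y)
    (hCorr.integrable_uncurry ha (continuous_uncurry_bvnPDFDerivCorr ρ)).integrableOn
    (fun x _ => (hCorr.integrable_left ha (continuous_uncurry_bvnPDFDerivCorr ρ) x).integrableOn)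
    (hFst.integrable_right ha (continuous_uncurry_bvnPDFDerivFst ρ) k).integrableOn
    (fun x _ => hFst.tendsto_left ha x)
    (hPDF.tendsto_right ha k)

theorem ncdf2_deriv_corr (h k ρ : ℝ) (hρ : |ρ| < 1) :
    HasDerivAt (fun r => ncdf2 h k r)
      ((2 * Real.pi * Real.sqrt (1 - ρ ^ 2))⁻¹ *
        Real.exp (-(h ^ 2 + k ^ 2 - 2 * ρ * h * k) / (2 * (1 - ρ ^ 2)))) ρ := by
  have hderiv := hasDerivAt_setIntegral_bvnPDF (Iic h ×ˢ Iic k) hρ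
  rw [uncurry_def, setIntegral_Iic_prod_Iic_bvnPDFDerivCorr hρ h k] at hderiv
  exact hderiv
end

section
/- Multivariate Stein's lemma: if (X₁, …, Xₙ) is a multivariate normal random vector and f : ℝⁿ → ℝ is continuously differentiable with f and its partial derivatives of at most polynomial growth, then E[(X₁ - E[X₁]) f(X₁, …, Xₙ)] = Σᵢ Cov(X₁, Xᵢ) E[∂f/∂xᵢ (X₁, …, Xₙ)]. -/
/-!
With `X = μ + A W` and `W` standard normal on `ℝⁿ`, `X₀ - μ₀ = ∑ⱼ A₀ⱼ Wⱼ`, so it suffices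
to show `E[Wⱼ g(W)] = E[∂ⱼ g(W)]` for `g = f (μ + A ·)`, and the chain rule gives
`∂ⱼ g = ∑ᵢ Aᵢⱼ (∂ᵢ f)(μ + A ·)`. The coordinate identity is one-dimensional Gaussian integration
by parts (`φ' = -x φ` for the standard density `φ`), applied on almost every line parallel to the
`j`-th axis by Fubini. All integrals converge because Gaussian measures have moments of all
orders and affine images of Gaussian measures are Gaussian.
-/

open MeasureTheory ProbabilityTheory Real
open scoped NNReal ENNReal Matrix

namespace ProbabilityTheory

instance isGaussian_pi_gaussianReal (ι : Type*) [Fintype ι] :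
    IsGaussian (Measure.pi fun _ : ι => gaussianReal 0 1) := by
  have h : Measure.pi (fun _ : ι => gaussianReal 0 1)
      = (stdGaussian (EuclideanSpace ℝ ι)).map (EuclideanSpace.equiv ι ℝ) := by
    rw [← map_pi_eq_stdGaussian, Measure.map_map (by fun_prop) (by fun_prop)]
    exact Measure.map_id.symm
  rw [h]
  infer_instance

namespace IsGaussian

variable {E F G : Type*} [NormedAddCommGroup E] [NormedSpace ℝ E] [MeasurableSpace E]
  [BorelSpace E] [CompleteSpace E] [SecondCountableTopology E] [NormedAddCommGroup F]
  {p : ℝ≥0∞}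

lemma memLp_one_add_norm_pow (μ : Measure E) [IsGaussian μ] (k : ℕ) (hp : p ≠ ∞) :
    MemLp (fun x : E => (1 + ‖x‖) ^ k) p μ := by
  rcases eq_or_ne k 0 with rfl | hk
  · simpa using memLp_const (1 : ℝ)
  have hlin : MemLp (fun x : E => 1 + ‖x‖) (p * k) μ :=
    (memLp_const (1 : ℝ)).add (memLp_id μ _ (ENNReal.mul_ne_top hp (by simp))).norm
  have hpow := hlin.norm_rpow_div k
  rw [ENNReal.mul_div_cancel_right (by simpa using hk) (by simp)] at hpow
  refine hpow.congr_norm (by fun_prop) (ae_of_all _ fun x => ?_)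
  have : 0 ≤ 1 + ‖x‖ := by positivity
  simp [abs_of_nonneg this]

lemma memLp_of_norm_le (μ : Measure E) [IsGaussian μ] {g : E → F}
    (hg : AEStronglyMeasurable g μ) {C : ℝ} {k : ℕ} (hb : ∀ x, ‖g x‖ ≤ C * (1 + ‖x‖) ^ k)
    (hp : p ≠ ∞) : MemLp g p μ :=
  ((memLp_one_add_norm_pow μ k hp).const_mul C).of_le hg <| ae_of_all _ fun x =>
    (hb x).trans <| (le_abs_self _).trans_eq (by simp [Real.norm_eq_abs])

lemma memLp_comp_add_clm_of_norm_le [NormedAddCommGroup G] [NormedSpace ℝ G] [MeasurableSpace G]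
    [BorelSpace G] (μ : Measure G) [IsGaussian μ] (c : E) (L : G →L[ℝ] E) {g : E → F}
    (hg : Continuous g) {C : ℝ} {k : ℕ} (hb : ∀ y, ‖g y‖ ≤ C * (1 + ‖y‖) ^ k) (hp : p ≠ ∞) :
    MemLp (fun x => g (c + L x)) p μ := by
  have : IsGaussian (μ.map fun x => c + L x) := by
    change IsGaussian (μ.map ((c + ·) ∘ L))
    rw [← Measure.map_map (by fun_prop) (by fun_prop)]
    infer_instance
  exact (memLp_map_measure_iff hg.aestronglyMeasurable (by fun_prop)).1
    (memLp_of_norm_le _ hg.aestronglyMeasurable hb hp)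

end IsGaussian

variable {μ : ℝ} {v : ℝ≥0}

lemma hasDerivAt_gaussianPDFReal (hv : v ≠ 0) (x : ℝ) :
    HasDerivAt (gaussianPDFReal μ v) (-((x - μ) / v) * gaussianPDFReal μ v x) x := by
  have hv' : (v : ℝ) ≠ 0 := by exact_mod_cast hv
  have hexp : HasDerivAt (fun x => -(x - μ) ^ 2 / (2 * v)) (-((x - μ) / v)) x :=
    ((((hasDerivAt_id x).sub_const μ).pow 2).neg.div_const (2 * (v : ℝ))).congr_deriv
      (by field_simp; simp)
  rw [gaussianPDFReal_def]
  exact (hexp.exp.const_mul (√(2 * π * v))⁻¹).congr_deriv (by ring)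

lemma integrable_gaussianReal_iff (hv : v ≠ 0) {g : ℝ → ℝ} :
    Integrable g (gaussianReal μ v) ↔ Integrable (fun x => gaussianPDFReal μ v x * g x) := by
  rw [gaussianReal_of_var_ne_zero _ hv, gaussianPDF_def,
    integrable_withDensity_iff_integrable_smul' (by fun_prop) (ae_of_all _ fun _ => by simp)]
  simp [ENNReal.toReal_ofReal (gaussianPDFReal_nonneg _ _ _)]

theorem integral_sub_mul_gaussianReal_eq_mul_integral_deriv (hv : v ≠ 0) {h h' : ℝ → ℝ}
    (hh : ∀ x, HasDerivAt h (h' x) x) (hint : Integrable h (gaussianReal μ v))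
    (hint_mul : Integrable (fun x => (x - μ) * h x) (gaussianReal μ v))
    (hint' : Integrable h' (gaussianReal μ v)) :
    ∫ x, (x - μ) * h x ∂gaussianReal μ v = v * ∫ x, h' x ∂gaussianReal μ v := by
  have hv' : (v : ℝ) ≠ 0 := by exact_mod_cast hv
  rw [integrable_gaussianReal_iff hv] at hint hint_mul hint'
  have hscore : (fun x => h x * (-((x - μ) / v) * gaussianPDFReal μ v x))
      = fun x => -(v : ℝ)⁻¹ * (gaussianPDFReal μ v x * ((x - μ) * h x)) := by
    ext x; field_simp
  have hparts := integral_mul_deriv_eq_deriv_mul_of_integrable (u := h) (u' := h')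
    (fun x _ => hh x) (fun x _ => hasDerivAt_gaussianPDFReal hv x)
    (by rw [Pi.mul_def, hscore]; exact hint_mul.const_mul _)
    (by simpa only [Pi.mul_def, mul_comm] using hint')
    (by simpa only [Pi.mul_def, mul_comm] using hint)
  rw [hscore, integral_const_mul, neg_mul, neg_inj, inv_mul_eq_iff_eq_mul₀ hv'] at hparts
  simp only [integral_gaussianReal_eq_integral_smul hv, smul_eq_mul]
  simpa only [mul_comm (h' _)] using hparts

end ProbabilityTheory

namespace MeasureTheory

variable {n : ℕ} {α : Fin (n + 1) → Type*} [∀ i, MeasurableSpace (α i)]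
  (μ : ∀ i, Measure (α i)) [∀ i, SigmaFinite (μ i)] (j : Fin (n + 1))
  {E : Type*} [NormedAddCommGroup E] {F : (∀ i, α i) → E}

lemma integrable_comp_insertNth_prod (hF : Integrable F (Measure.pi μ)) :
    Integrable (fun z : α j × ∀ k, α (j.succAbove k) => F (j.insertNth z.1 z.2))
      ((μ j).prod (Measure.pi fun k => μ (j.succAbove k))) :=
  (measurePreserving_piFinSuccAbove μ j).symm.integrable_comp_of_integrable hF

lemma Integrable.ae_integrable_comp_insertNth (hF : Integrable F (Measure.pi μ)) :
    ∀ᵐ y ∂Measure.pi (fun k => μ (j.succAbove k)),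
      Integrable (fun t => F (j.insertNth t y)) (μ j) :=
  (integrable_comp_insertNth_prod μ j hF).prod_left_ae

lemma integral_pi_eq_integral_integral_insertNth [NormedSpace ℝ E]
    (hF : Integrable F (Measure.pi μ)) :
    ∫ x, F x ∂Measure.pi μ
      = ∫ y, ∫ t, F (j.insertNth t y) ∂μ j ∂Measure.pi (fun k => μ (j.succAbove k)) := by
  rw [← integral_prod_symm _ (integrable_comp_insertNth_prod μ j hF),
    ← (measurePreserving_piFinSuccAbove μ j).symm.integral_comp']
  rfl

end MeasureTheory

theorem hasDerivAt_finInsertNth {𝕜 : Type*} [NontriviallyNormedField 𝕜] {n : ℕ}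
    (j : Fin (n + 1)) (y : Fin n → 𝕜) (t : 𝕜) :
    HasDerivAt (fun t => j.insertNth (α := fun _ => 𝕜) t y) (Pi.single j 1) t := by
  have : Function.update (j.insertNth (α := fun _ => 𝕜) 0 y) j
      = fun t => j.insertNth (α := fun _ => 𝕜) t y :=
    funext fun t => Fin.update_insertNth _ _ _ _
  exact this ▸ hasDerivAt_update _ j t

namespace ProbabilityTheory

variable {n : ℕ}

theorem integral_eval_mul_pi_gaussianReal_eq_integral_fderiv (j : Fin n) {g : (Fin n → ℝ) → ℝ}
    (hg : Differentiable ℝ g)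
    (hint : Integrable g (Measure.pi fun _ => gaussianReal 0 1))
    (hint_mul : Integrable (fun w => w j * g w) (Measure.pi fun _ => gaussianReal 0 1))
    (hint' : Integrable (fun w => fderiv ℝ g w (Pi.single j 1))
      (Measure.pi fun _ => gaussianReal 0 1)) :
    ∫ w, w j * g w ∂(Measure.pi fun _ => gaussianReal 0 1)
      = ∫ w, fderiv ℝ g w (Pi.single j 1) ∂(Measure.pi fun _ => gaussianReal 0 1) := by
  obtain ⟨n, rfl⟩ : ∃ m, n = m + 1 := Nat.exists_eq_add_one.mpr j.pos
  rw [integral_pi_eq_integral_integral_insertNth _ j hint_mul,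
    integral_pi_eq_integral_integral_insertNth _ j hint']
  refine integral_congr_ae ?_
  filter_upwards [hint.ae_integrable_comp_insertNth _ j, hint_mul.ae_integrable_comp_insertNth _ j,
    hint'.ae_integrable_comp_insertNth _ j] with y hy hy_mul hy'
  simpa using integral_sub_mul_gaussianReal_eq_mul_integral_deriv one_ne_zero
    (fun t => (hg _).hasFDerivAt.comp_hasDerivAt t (hasDerivAt_finInsertNth j y t)) hy
    (by simpa using hy_mul) hy'

lemma integrable_eval_mul_pi_gaussianReal (j : Fin n) {g : (Fin n → ℝ) → ℝ}
    (hg : MemLp g 2 (Measure.pi fun _ => gaussianReal 0 1)) :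
    Integrable (fun w => w j * g w) (Measure.pi fun _ => gaussianReal 0 1) :=
  (IsGaussian.memLp_dual _ (ContinuousLinearMap.proj j) 2 (by simp)).integrable_mul hg

lemma fderiv_comp_add_mulVec_apply_single {ι κ : Type*} [Fintype ι] [DecidableEq ι]
    [Fintype κ] [DecidableEq κ] {f : (ι → ℝ) → ℝ} (hf : Differentiable ℝ f) (μ : ι → ℝ)
    (A : Matrix ι κ ℝ) (w : κ → ℝ) (j : κ) :
    fderiv ℝ (fun w => f (μ + A *ᵥ w)) w (Pi.single j 1)
      = ∑ i, A i j * fderiv ℝ f (μ + A *ᵥ w) (Pi.single i 1) := by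
  have hL : HasFDerivAt (fun w => μ + A *ᵥ w) (Matrix.mulVecLin A).toContinuousLinearMap w :=
    (Matrix.mulVecLin A).toContinuousLinearMap.hasFDerivAt.const_add μ
  change fderiv ℝ (f ∘ fun w => μ + A *ᵥ w) w _ = _
  rw [((hf _).hasFDerivAt.comp w hL).fderiv, ContinuousLinearMap.comp_apply]
  change fderiv ℝ f _ (A *ᵥ Pi.single j 1) = _
  rw [Matrix.mulVec_single_one, pi_eq_sum_univ' (A.col j), map_sum]
  simp only [Matrix.col_apply, map_smul, smul_eq_mul]

theorem integral_eval_mul_comp_add_mulVec_pi_gaussianReal {m : ℕ} (μ : Fin m → ℝ)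
    (A : Matrix (Fin m) (Fin n) ℝ) (j : Fin n) {f : (Fin m → ℝ) → ℝ} (hf : Differentiable ℝ f)
    (hfT : MemLp (fun w => f (μ + A *ᵥ w)) 2 (Measure.pi fun _ => gaussianReal 0 1))
    (hdf : ∀ i, Integrable (fun w => fderiv ℝ f (μ + A *ᵥ w) (Pi.single i 1))
      (Measure.pi fun _ => gaussianReal 0 1)) :
    ∫ w, w j * f (μ + A *ᵥ w) ∂(Measure.pi fun _ => gaussianReal 0 1)
      = ∑ i, A i j * ∫ w, fderiv ℝ f (μ + A *ᵥ w) (Pi.single i 1)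
          ∂(Measure.pi fun _ => gaussianReal 0 1) := by
  have hg : Differentiable ℝ fun w => f (μ + A *ᵥ w) :=
    hf.comp <| (differentiable_const μ).add
      (Matrix.mulVecLin A).toContinuousLinearMap.differentiable
  rw [integral_eval_mul_pi_gaussianReal_eq_integral_fderiv j hg (hfT.integrable one_le_two)
    (integrable_eval_mul_pi_gaussianReal j hfT) ?_]
  · simp only [fderiv_comp_add_mulVec_apply_single hf]
    rw [integral_finsetSum _ fun i _ => (hdf i).const_mul _]
    simp only [integral_const_mul]
  · simp only [fderiv_comp_add_mulVec_apply_single hf]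
    exact integrable_finsetSum _ fun i _ => (hdf i).const_mul _

end ProbabilityTheory

/-- The Gaussian vector `X` is represented as `X i = μ i + ∑ j, A i j * W j` where `W` is a vector
of i.i.d. standard normals, so that `Cov (X i, X k) = ∑ j, A i j * A k j`. -/
theorem multivariate_stein (n : ℕ) (hn : 0 < n) (μ : Fin n → ℝ)
    (A : Matrix (Fin n) (Fin n) ℝ) (f : (Fin n → ℝ) → ℝ)
    (hf : ContDiff ℝ 1 f)
    (hfgrowth : ∃ (C : ℝ) (k : ℕ), ∀ x, |f x| ≤ C * (1 + ‖x‖) ^ k)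
    (hf'growth : ∃ (C : ℝ) (k : ℕ), ∀ x, ‖fderiv ℝ f x‖ ≤ C * (1 + ‖x‖) ^ k) :
    (∫ w : Fin n → ℝ,
        ((μ ⟨0, hn⟩ + ∑ j, A ⟨0, hn⟩ j * w j) - μ ⟨0, hn⟩) *
          f (fun i => μ i + ∑ j, A i j * w j)
        ∂(Measure.pi fun _ : Fin n => gaussianReal 0 1))
      = ∑ i, (∑ j, A ⟨0, hn⟩ j * A i j) *
          ∫ w : Fin n → ℝ,
            fderiv ℝ f (fun i => μ i + ∑ j, A i j * w j) (Pi.single i 1)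
            ∂(Measure.pi fun _ : Fin n => gaussianReal 0 1) := by
  obtain ⟨C, k, hfC⟩ := hfgrowth
  obtain ⟨C', k', hf'C⟩ := hf'growth
  let L := (Matrix.mulVecLin A).toContinuousLinearMap
  have hfT : MemLp (fun w => f (μ + A *ᵥ w)) 2 (Measure.pi fun _ => gaussianReal 0 1) :=
    IsGaussian.memLp_comp_add_clm_of_norm_le _ μ L hf.continuous
      (fun y => (Real.norm_eq_abs _).trans_le (hfC y)) (by simp)
  have hdf (i : Fin n) : Integrable (fun w => fderiv ℝ f (μ + A *ᵥ w) (Pi.single i 1))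
      (Measure.pi fun _ => gaussianReal 0 1) :=
    ((IsGaussian.memLp_comp_add_clm_of_norm_le _ μ L (hf.continuous_fderiv one_ne_zero) hf'C
      (p := 1) (by simp)).integrable le_rfl).apply_continuousLinearMap _
  have hcoord (j : Fin n) := integral_eval_mul_comp_add_mulVec_pi_gaussianReal μ A j
    (hf.differentiable one_ne_zero) hfT hdf
  change ∫ w, ((μ ⟨0, hn⟩ + (A *ᵥ w) ⟨0, hn⟩) - μ ⟨0, hn⟩) * f (μ + A *ᵥ w) ∂_
    = ∑ i, _ * ∫ w, fderiv ℝ f (μ + A *ᵥ w) (Pi.single i 1) ∂_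
  simp only [add_sub_cancel_left, Matrix.mulVec, dotProduct, Finset.sum_mul, mul_assoc]
  rw [integral_finsetSum _ fun j _ => (integrable_eval_mul_pi_gaussianReal j hfT).const_mul _]
  simp only [integral_const_mul, hcoord, Finset.mul_sum]
  rw [Finset.sum_comm]
end

section
/- Let (X₁, X₂) be jointly Gaussian with Cov(X₁, X₂) = ν₁₂ and X₁ ~ N(μ₁, ν₁₁) with ν₁₁ > 0. Then Cov(ReLU(X₁), X₂) = ν₁₂ · Φ(μ₁/√ν₁₁), where ReLU(x) = max(0, x). -/
open MeasureTheory ProbabilityTheory Real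
open scoped NNReal

/-!
With `Z` the first coordinate, the second coordinate is independent of `Z` and centred, so the
covariance is `b * E[Z ⋅ ReLU(μ₁ + a Z)]`. On the half-line where `μ₁ + a z > 0`, integrate by
parts with `z φ(z) = -φ'(z)`: the boundary term vanishes because the ReLU does, leaving
`a * P(μ₁ + a Z > 0) = a * Φ(μ₁ / |a|)`.
-/

open Filter Set Topology

lemma gaussianPDFReal_zero_one : gaussianPDFReal 0 1 = npdf := by
  ext x
  simp [gaussianPDFReal, npdf]

lemma npdf_neg (x : ℝ) : npdf (-x) = npdf x := by
  simp [npdf]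

lemma npdf_eq_mul_exp_neg_mul_sq (x : ℝ) :
    npdf x = (√(2 * π))⁻¹ * exp (-(1 / 2) * x ^ 2) := by
  unfold npdf
  ring_nf

lemma hasDerivAt_npdf (x : ℝ) : HasDerivAt npdf (-x * npdf x) x :=
  ((hasDerivAt_pow 2 x).neg.div_const 2).exp.const_mul (√(2 * π))⁻¹ |>.congr_deriv
    (by simp only [npdf, Pi.neg_apply]; ring)

lemma integrable_pow_mul_npdf (n : ℕ) : Integrable fun x => x ^ n * npdf x := by
  have h := (integrable_rpow_mul_exp_neg_mul_sq (b := 1 / 2) (by norm_num) (s := n)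
    (by linarith [n.cast_nonneg (α := ℝ)])).const_mul (√(2 * π))⁻¹
  refine h.congr (ae_of_all _ fun x => ?_)
  simp only [rpow_natCast, npdf_eq_mul_exp_neg_mul_sq]
  ring

lemma tendsto_pow_mul_npdf_atTop (n : ℕ) : Tendsto (fun x => x ^ n * npdf x) atTop (𝓝 0) := by
  have hexp : Tendsto (fun x : ℝ => exp (-(1 / 2) * x)) atTop (𝓝 0) :=
    tendsto_exp_atBot.comp (tendsto_id.const_mul_atTop_of_neg (by norm_num))
  have h := ((rpow_mul_exp_neg_mul_sq_isLittleO_exp_neg (b := 1 / 2) (by norm_num) n).trans_tendsto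
    hexp).const_mul (√(2 * π))⁻¹
  rw [mul_zero] at h
  refine h.congr fun x => ?_
  simp only [rpow_natCast, npdf_eq_mul_exp_neg_mul_sq]
  ring

lemma integral_Ioi_npdf (t : ℝ) : ∫ x in Ioi t, npdf x = ncdf (-t) := by
  have h := integral_comp_neg_Iic (-t) npdf
  simp only [neg_neg, npdf_neg] at h
  exact h.symm

lemma integral_Ioi_affine_mul_mul_npdf (α β t : ℝ) :
    ∫ x in Ioi t, (α + β * x) * x * npdf x = (α + β * t) * npdf t + β * ncdf (-t) := by
  have hderiv (x : ℝ) : HasDerivAt (fun x => -((α + β * x) * npdf x))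
      ((α + β * x) * x * npdf x - β * npdf x) x :=
    (((hasDerivAt_id x).const_mul β).const_add α).mul (hasDerivAt_npdf x) |>.neg |>.congr_deriv
      (by simp only [id]; ring)
  have hφ : Integrable npdf := by simpa using integrable_pow_mul_npdf 0
  have hint : Integrable fun x => (α + β * x) * x * npdf x :=
    ((integrable_pow_mul_npdf 1).const_mul α).add ((integrable_pow_mul_npdf 2).const_mul β)
      |>.congr (ae_of_all _ fun x => by simp only [Pi.add_apply]; ring)
  have hlim : Tendsto (fun x => -((α + β * x) * npdf x)) atTop (𝓝 0) := by
    have h := (((tendsto_pow_mul_npdf_atTop 0).const_mul α).add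
      ((tendsto_pow_mul_npdf_atTop 1).const_mul β)).neg
    simp only [mul_zero, add_zero, neg_zero] at h
    exact h.congr fun x => by ring
  have hftc := integral_Ioi_of_hasDerivAt_of_tendsto' (a := t) (fun x _ => hderiv x)
    (hint.sub (hφ.const_mul β)).integrableOn hlim
  rw [integral_sub hint.integrableOn (hφ.const_mul β).integrableOn, integral_const_mul,
    integral_Ioi_npdf] at hftc
  linarith

lemma integral_mul_relu_affine_gaussianReal_of_pos (α : ℝ) {β : ℝ} (hβ : 0 < β) :
    ∫ x, x * max 0 (α + β * x) ∂gaussianReal 0 1 = β * ncdf (α / β) := by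
  have hdensity : (fun x => npdf x • (x * max 0 (α + β * x)))
      = (Ioi (-α / β)).indicator fun x => (α + β * x) * x * npdf x := by
    ext x
    by_cases hx : x ∈ Ioi (-α / β)
    · have hpos : 0 ≤ α + β * x := by
        rw [mem_Ioi, div_lt_iff₀ hβ] at hx
        linarith
      rw [Set.indicator_of_mem hx, max_eq_right hpos, smul_eq_mul]
      ring
    · have hneg : α + β * x ≤ 0 := by
        rw [mem_Ioi, not_lt, le_div_iff₀ hβ] at hx
        linarith
      rw [Set.indicator_of_notMem hx, max_eq_left hneg, mul_zero, smul_zero]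
  rw [integral_gaussianReal_eq_integral_smul one_ne_zero, gaussianPDFReal_zero_one, hdensity,
    integral_indicator measurableSet_Ioi, integral_Ioi_affine_mul_mul_npdf,
    mul_div_cancel₀ _ hβ.ne', neg_div, neg_neg]
  ring

lemma integral_mul_relu_affine_gaussianReal (α β : ℝ) :
    ∫ x, x * max 0 (α + β * x) ∂gaussianReal 0 1 = β * ncdf (α / |β|) := by
  rcases lt_trichotomy β 0 with hβ | rfl | hβ
  · have hsymm : ∫ x, x * max 0 (α + β * x) ∂gaussianReal 0 1
        = -∫ x, x * max 0 (α + -β * x) ∂gaussianReal 0 1 := by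
      conv_lhs => rw [← neg_zero, ← gaussianReal_map_neg (μ := 0) (v := 1)]
      rw [integral_map (by fun_prop) (by fun_prop), ← integral_neg]
      simp only [neg_zero, mul_neg, neg_mul]
    rw [hsymm, integral_mul_relu_affine_gaussianReal_of_pos α (neg_pos.2 hβ), abs_of_neg hβ]
    ring
  · simp only [zero_mul, add_zero, integral_mul_const, integral_id_gaussianReal]
  · rw [integral_mul_relu_affine_gaussianReal_of_pos α hβ, abs_of_pos hβ]

lemma memLp_relu_affine_gaussianReal (α β m : ℝ) (v : ℝ≥0) (p : ℝ≥0) :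
    MemLp (fun x => max 0 (α + β * x)) p (gaussianReal m v) := by
  have h : MemLp (fun x => α + β * x) p (gaussianReal m v) :=
    (memLp_const α).add ((memLp_id_gaussianReal p).const_mul β)
  simpa only [max_comm] using h.pos_part

lemma integral_prod_mul_affine {μ ν : Measure ℝ} [SFinite μ] [IsProbabilityMeasure ν]
    {f : ℝ → ℝ} (hf : Integrable f μ) (hxf : Integrable (fun x => x * f x) μ)
    (hy : Integrable (fun y => y) ν) (p b c : ℝ) :
    ∫ w, f w.1 * (p + b * w.1 + c * w.2) ∂μ.prod ν
      = p * ∫ x, f x ∂μ + b * ∫ x, x * f x ∂μ + c * ((∫ x, f x ∂μ) * ∫ y, y ∂ν) := by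
  have h₁ := (hf.comp_fst ν).const_mul p
  have h₂ := (hxf.comp_fst ν).const_mul b
  have h₁₂ : Integrable (fun w => p * f w.1 + b * (w.1 * f w.1)) (μ.prod ν) := h₁.add h₂
  have h₃ := (hf.mul_prod hy).const_mul c
  calc ∫ w, f w.1 * (p + b * w.1 + c * w.2) ∂μ.prod ν
      = ∫ w, p * f w.1 + b * (w.1 * f w.1) + c * (f w.1 * w.2) ∂μ.prod ν :=
        integral_congr_ae (ae_of_all _ fun w => by ring)
    _ = _ := by
      rw [integral_add h₁₂ h₃, integral_add h₁ h₂, integral_const_mul, integral_const_mul,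
        integral_const_mul, integral_fun_fst f, integral_fun_fst (fun x => x * f x),
        integral_prod_mul f fun y => y, probReal_univ, one_smul, one_smul]

theorem gaussian_cov_relu_linear_general (μ₁ μ₂ ν₁₁ ν₁₂ a b c : ℝ)
    (h11 : ν₁₁ = a ^ 2) (h12 : ν₁₂ = a * b) :
    (∫ w : ℝ × ℝ, max 0 (μ₁ + a * w.1) * (μ₂ + b * w.1 + c * w.2) ∂P2)
        - (∫ w : ℝ × ℝ, max 0 (μ₁ + a * w.1) ∂P2) * μ₂
      = ν₁₂ * ncdf (μ₁ / Real.sqrt ν₁₁) := by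
  have hrelu : MemLp (fun x => max 0 (μ₁ + a * x)) 2 (gaussianReal 0 1) :=
    memLp_relu_affine_gaussianReal μ₁ a 0 1 2
  have hid : MemLp (fun x : ℝ => x) 2 (gaussianReal 0 1) := memLp_id_gaussianReal 2
  rw [P2, integral_prod_mul_affine (hrelu.integrable one_le_two) (hid.integrable_mul hrelu)
      (hid.integrable one_le_two), integral_fun_fst (fun x => max 0 (μ₁ + a * x)),
    probReal_univ, one_smul, integral_id_gaussianReal, integral_mul_relu_affine_gaussianReal,
    h12, h11, sqrt_sq_eq_abs]
  ring

theorem gaussian_cov_relu_linear (μ₁ μ₂ ν₁₁ ν₂₂ ν₁₂ a b c : ℝ)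
    (h11 : ν₁₁ = a ^ 2) (h22 : ν₂₂ = b ^ 2 + c ^ 2) (h12 : ν₁₂ = a * b)
    (hp1 : 0 < ν₁₁) :
    (∫ w : ℝ × ℝ, max 0 (μ₁ + a * w.1) * (μ₂ + b * w.1 + c * w.2) ∂P2)
        - (∫ w : ℝ × ℝ, max 0 (μ₁ + a * w.1) ∂P2) * μ₂
      = ν₁₂ * ncdf (μ₁ / Real.sqrt ν₁₁) :=
  gaussian_cov_relu_linear_general μ₁ μ₂ ν₁₁ ν₁₂ a b c h11 h12
end
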